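/- Let (M, η, h) be a contact Hamiltonian system with Reeb vector field R and Jacobi bracket {·,·}. Then: (i) a smooth function f on M is a dissipated quantity (i.e., X_h(f) = −R(h)·f) if and only if {f, h} = 0; in particular h itself is a dissipated quantity; and (ii) if f₁ and f₂ are dissipated quantities, then the quotient f₁/f₂ is a conserved quantity (i.e., X_h(f₁/f₂) = 0) on the open set M \ f₂^{-1}(0). -/

import Mathlib

open Manifold Function Set

noncomputable section

variable {E : Type*} [NormedAddCommGroup E] [NormedSpace ℝ E]
  {H : Type*} [TopologicalSpace H] {I : ModelWithCorners ℝ E H}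
  {M : Type*} [TopologicalSpace M] [ChartedSpace H M] [IsManifold I (⊤ : ℕ∞) M]

/-- A (rough) vector field on `M`. -/
abbrev VF (I : ModelWithCorners ℝ E H) (M : Type*) [TopologicalSpace M] [ChartedSpace H M] :=
  (x : M) → TangentSpace I x

/-- A (rough) one-form on `M`. -/
abbrev OneForm (I : ModelWithCorners ℝ E H) (M : Type*) [TopologicalSpace M] [ChartedSpace H M] :=
  (x : M) → TangentSpace I x →L[ℝ] ℝ

/-- Smoothness of a real function on `M`. -/
def SmoothFn (I : ModelWithCorners ℝ E H) {M : Type*} [TopologicalSpace M] [ChartedSpace H M]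
    (f : M → ℝ) : Prop :=
  ContMDiff I 𝓘(ℝ, ℝ) (⊤ : ℕ∞) f

/-- Smoothness of a vector field, as a section of the tangent bundle. -/
def SmoothVF (I : ModelWithCorners ℝ E H) {M : Type*} [TopologicalSpace M] [ChartedSpace H M]
    [IsManifold I (⊤ : ℕ∞) M] (X : VF I M) : Prop :=
  ContMDiff I I.tangent (⊤ : ℕ∞) (fun x => (⟨x, X x⟩ : TangentBundle I M))

/-- Smoothness of a one-form, as a section of the bundle of continuous linear maps
from the tangent bundle to the trivial line bundle. -/
def SmoothOneForm (I : ModelWithCorners ℝ E H) {M : Type*} [TopologicalSpace M] [ChartedSpace H M]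
    [IsManifold I (⊤ : ℕ∞) M] (η : OneForm I M) : Prop :=
  ContMDiff I (I.prod 𝓘(ℝ, E →L[ℝ] ℝ)) (⊤ : ℕ∞)
    (fun x => (Bundle.TotalSpace.mk x (η x) :
      Bundle.TotalSpace (E →L[ℝ] ℝ)
        (fun x : M => (TangentSpace I : M → Type _) x →SL[RingHom.id ℝ]
          Bundle.Trivial M ℝ x)))

/-- The derivative of a function `f` along a vector field `X`, i.e. `X(f)`. -/
def vfd (X : VF I M) (f : M → ℝ) (x : M) : ℝ :=
  mfderiv I 𝓘(ℝ, ℝ) f x (X x)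

/-- The local representative of a one-form in the preferred chart around `x₀`. -/
def formRep (η : OneForm I M) (x₀ : M) : E → (E →L[ℝ] ℝ) := fun y =>
  (η ((extChartAt I x₀).symm y)).comp (mfderiv 𝓘(ℝ, E) I ((extChartAt I x₀).symm) y)

/-- The exterior derivative of a one-form `η`, evaluated at `x` on tangent vectors `u, v`;
computed in the preferred chart at `x`. -/
def extD (η : OneForm I M) (x : M) (u v : TangentSpace I x) : ℝ :=
  fderiv ℝ (fun y => formRep η x y (v : E)) (extChartAt I x x) (u : E)
  - fderiv ℝ (fun y => formRep η x y (u : E)) (extChartAt I x x) (v : E)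

/-- Lie derivative of the one-form `η` along `X`, via Cartan's magic formula
`L_X η = ι_X dη + d(η(X))`. -/
def lieD (X : VF I M) (η : OneForm I M) (x : M) (v : TangentSpace I x) : ℝ :=
  have d : ℝ := mfderiv I 𝓘(ℝ, ℝ) (fun y => η y (X y)) x v
  extD η x (X x) v + d

/-- The bundle map `♭(v) = ι_v dη + η(v) η` of a contact form, evaluated on `w`. -/
def flatAt (η : OneForm I M) (x : M) (v w : TangentSpace I x) : ℝ :=
  extD η x v w + η x v * η x w

/-- A contact form: a smooth one-form whose flat map `♭` is fibrewise a bijection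
onto the continuous dual (the standard non-degeneracy condition, equivalent to
`η ∧ (dη)ⁿ` being a volume form). -/
def IsContactForm (I : ModelWithCorners ℝ E H) {M : Type*} [TopologicalSpace M] [ChartedSpace H M]
    [IsManifold I (⊤ : ℕ∞) M] (η : OneForm I M) : Prop :=
  SmoothOneForm I η ∧ ∀ x : M,
    (∀ v : TangentSpace I x, (∀ w, flatAt η x v w = 0) → v = 0) ∧
    (∀ α : TangentSpace I x →L[ℝ] ℝ, ∃ v : TangentSpace I x, ∀ w, flatAt η x v w = α w)

/-- The Reeb vector field of a contact form. -/
def IsReeb (η : OneForm I M) (R : VF I M) : Prop :=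
  (∀ x, η x (R x) = 1) ∧ (∀ x, ∀ w : TangentSpace I x, extD η x (R x) w = 0)

/-- The contact Hamiltonian vector field of `f`: `η(X_f) = -f` and `L_{X_f} η = -R(f) η`. -/
def IsContactHamVF (η : OneForm I M) (R : VF I M) (f : M → ℝ) (Xf : VF I M) : Prop :=
  (∀ x, η x (Xf x) = - f x) ∧
  (∀ x, ∀ w : TangentSpace I x, lieD Xf η x w = - vfd R f x * η x w)

/-- `V = ♭⁻¹(df)`. -/
def IsFlatInvOfDiff (η : OneForm I M) (f : M → ℝ) (V : VF I M) : Prop :=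
  ∀ x, ∀ w : TangentSpace I x, flatAt η x (V x) w = mfderiv I 𝓘(ℝ, ℝ) f x w

/-- The value of the Jacobi bracket `{f, g} = -dη(♭⁻¹df, ♭⁻¹dg) - f R(g) + g R(f)`,
given flat-inverses `Vf = ♭⁻¹(df)`, `Vg = ♭⁻¹(dg)`. -/
def jacVal (η : OneForm I M) (R : VF I M) (f g : M → ℝ) (Vf Vg : VF I M) (x : M) : ℝ :=
  - extD η x (Vf x) (Vg x) - f x * vfd R g x + g x * vfd R f x

/-- The symplectic form `ω = -dθ` of an exact symplectic manifold. -/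
def omegaOf (θ : OneForm I M) (x : M) (u v : TangentSpace I x) : ℝ :=
  - extD θ x u v

/-- An exact symplectic structure: `θ` smooth with `ω = -dθ` (fibrewise) non-degenerate. -/
def IsExactSymplectic (I : ModelWithCorners ℝ E H) {M : Type*} [TopologicalSpace M]
    [ChartedSpace H M] [IsManifold I (⊤ : ℕ∞) M] (θ : OneForm I M) : Prop :=
  SmoothOneForm I θ ∧ ∀ x : M,
    (∀ v : TangentSpace I x, (∀ w, omegaOf θ x v w = 0) → v = 0) ∧
    (∀ α : TangentSpace I x →L[ℝ] ℝ, ∃ v : TangentSpace I x, ∀ w, omegaOf θ x v w = α w)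

/-- The Liouville vector field: `ι_Δ ω = -θ`. -/
def IsLiouvilleVF (θ : OneForm I M) (Δ : VF I M) : Prop :=
  ∀ x, ∀ w : TangentSpace I x, omegaOf θ x (Δ x) w = - θ x w

/-- The symplectic Hamiltonian vector field of `f`: `ι_{X_f} ω = df`. -/
def IsSymplHamVF (θ : OneForm I M) (f : M → ℝ) (Xf : VF I M) : Prop :=
  ∀ x, ∀ w : TangentSpace I x, omegaOf θ x (Xf x) w = mfderiv I 𝓘(ℝ, ℝ) f x w

/-- `Z = [X, Y]`, characterized by its action on smooth functions. -/
def IsMLieBracket (I : ModelWithCorners ℝ E H) {M : Type*} [TopologicalSpace M]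
    [ChartedSpace H M] [IsManifold I (⊤ : ℕ∞) M] (X Y Z : VF I M) : Prop :=
  ∀ f : M → ℝ, SmoothFn I f → ∀ x, vfd Z f x = vfd X (vfd Y f) x - vfd Y (vfd X f) x

/-- A global flow of the vector field `X`. -/
def IsGlobalFlow (X : VF I M) (φ : ℝ → M → M) : Prop :=
  (∀ x, φ 0 x = x) ∧ (∀ s t x, φ (s + t) x = φ s (φ t x)) ∧
    ∀ x, IsMIntegralCurve (fun t => φ t x) X

/-- A vector field is complete if it admits a global flow. -/
def IsCompleteVF (X : VF I M) : Prop :=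
  ∃ φ : ℝ → M → M, IsGlobalFlow X φ


/-- Differential of a real function, applied to a tangent vector (as a real number). -/
def dval (f : M → ℝ) (x : M) (w : TangentSpace I x) : ℝ :=
  mfderiv I 𝓘(ℝ, ℝ) f x w

/-- Differential of a real function at a point, as a continuous linear functional. -/
def dCLM (f : M → ℝ) (x : M) : TangentSpace I x →L[ℝ] ℝ :=
  mfderiv I 𝓘(ℝ, ℝ) f x

/-- The sharp map of the Jacobi structure of a contact form:
`w = ♯_Λ(α)` iff `♭(w) = α - α(R) η`. -/
def IsSharpRel (η : OneForm I M) (R : VF I M) (x : M) (α : TangentSpace I x →L[ℝ] ℝ)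
    (w : TangentSpace I x) : Prop :=
  ∀ u : TangentSpace I x, flatAt η x w u = α u - α (R x) * η x u

/-- Local chart representative of a rough covector field. -/
def formRepRaw (β : (x : M) → TangentSpace I x → ℝ) (x₀ : M) : E → E → ℝ := fun y u =>
  β ((extChartAt I x₀).symm y) (mfderiv 𝓘(ℝ, E) I ((extChartAt I x₀).symm) y u)

/-- Exterior derivative of a rough covector field, in the preferred chart. -/
def extDRaw (β : (x : M) → TangentSpace I x → ℝ) (x : M) (u v : TangentSpace I x) : ℝ :=
  fderiv ℝ (fun y => formRepRaw β x y (v : E)) (extChartAt I x x) (u : E)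
  - fderiv ℝ (fun y => formRepRaw β x y (u : E)) (extChartAt I x x) (v : E)

/-- `Y` is an infinitesimal symplectomorphism of the exact symplectic structure `θ`:
`L_Y ω = 0`, which (since `ω = -dθ` is closed) means that `ι_Y ω` is closed. -/
def IsInfSymplVF (θ : OneForm I M) (Y : VF I M) : Prop :=
  ∀ x : M, ∀ u v : TangentSpace I x, extDRaw (fun z w => omegaOf θ z (Y z) w) x u v = 0

/-- `X` is an infinitesimal contactomorphism of `η` with conformal factor `a`. -/
def IsInfContactWith (η : OneForm I M) (X : VF I M) (a : M → ℝ) : Prop :=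
  SmoothVF I X ∧ ∀ x : M, ∀ w : TangentSpace I x, lieD X η x w = a x * η x w

/-- `Y` is an infinitesimal homogeneous symplectomorphism of `θ`: `L_Y θ = 0`. -/
def IsInfHomSympl (θ : OneForm I M) (Y : VF I M) : Prop :=
  SmoothVF I Y ∧ ∀ x : M, ∀ w : TangentSpace I x, lieD Y θ x w = 0

/-- The lattice relation on `ℝ^nn` identifying `ℤ^k × {0}`-translates:
the quotient of `ℝ^nn` by this relation is `𝕋^k × ℝ^(nn-k)`. -/
def LatRel (nn k : ℕ) (t s : Fin nn → ℝ) : Prop :=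
  (∀ i : Fin nn, (i : ℕ) < k → ∃ m : ℤ, t i - s i = (m : ℝ)) ∧
    (∀ i : Fin nn, k ≤ (i : ℕ) → t i = s i)

/-- The `ℝ^nn`-action obtained by composing the flows `φ i`. -/
def actOf {nn : ℕ} (φ : Fin nn → ℝ → M → M) (t : Fin nn → ℝ) (x : M) : M :=
  (List.ofFn fun i => φ i (t i)).foldr (fun h y => h y) x

section TwoManifolds

variable {E' : Type*} [NormedAddCommGroup E'] [NormedSpace ℝ E']
  {H' : Type*} [TopologicalSpace H'] {I' : ModelWithCorners ℝ E' H'}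
  {M' : Type*} [TopologicalSpace M'] [ChartedSpace H' M'] [IsManifold I' (⊤ : ℕ∞) M']

/-- Pullback of a one-form along a map. -/
def pullbackOF (prj : M' → M) (η : OneForm I M) : OneForm I' M' :=
  fun p => (η (prj p)).comp (mfderiv I' I prj p)

/-- `prj` is a (topologically) locally trivial fiber bundle projection. -/
def IsLocTrivFibration (prj : M' → M) : Prop :=
  Function.Surjective prj ∧ Continuous prj ∧ ∀ x : M, ∃ U : Set M, IsOpen U ∧ x ∈ U ∧
    ∃ e : ↥(prj ⁻¹' U) ≃ₜ ↥U × ↥(prj ⁻¹' {x}), ∀ p : ↥(prj ⁻¹' U), ((e p).1 : M) = prj (p : M')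

/-- `prj : M' → M` is a symplectization of the contact manifold `(M, η)`, with exact
symplectic potential `θ` on `M'` and conformal factor `σf`: `σf • (prj* η) = θ`. -/
def IsSymplectization (prj : M' → M) (η : OneForm I M) (θ : OneForm I' M') (σf : M' → ℝ) : Prop :=
  ContMDiff I' I (⊤ : ℕ∞) prj ∧ IsLocTrivFibration prj ∧ (∀ p, σf p ≠ 0) ∧
    ∀ p : M', ∀ w : TangentSpace I' p, σf p * pullbackOF prj η p w = θ p w

/-- A homogeneous symplectomorphism between exact symplectic manifolds: a diffeomorphism
preserving the symplectic potentials. -/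
def IsHomSymplectomorphism (θ : OneForm I M) (θ' : OneForm I' M') (Φ : M → M') : Prop :=
  Function.Bijective Φ ∧ ContMDiff I I' (⊤ : ℕ∞) Φ ∧
    (∃ G : M' → M, Function.LeftInverse G Φ ∧ Function.RightInverse G Φ ∧ ContMDiff I' I (⊤ : ℕ∞) G) ∧
    ∀ x : M, ∀ w : TangentSpace I x, pullbackOF Φ θ' x w = θ x w

/-- A contactomorphism with conformal factor `cf`: a diffeomorphism with `Φ* η' = cf • η`. -/
def IsContactomorphismWith (η : OneForm I M) (η' : OneForm I' M') (Φ : M → M') (cf : M → ℝ) :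
    Prop :=
  Function.Bijective Φ ∧ ContMDiff I I' (⊤ : ℕ∞) Φ ∧
    (∃ G : M' → M, Function.LeftInverse G Φ ∧ Function.RightInverse G Φ ∧ ContMDiff I' I (⊤ : ℕ∞) G) ∧
    (∀ x, cf x ≠ 0) ∧ ∀ x : M, ∀ w : TangentSpace I x, pullbackOF Φ η' x w = cf x * η x w

/-- A contactomorphism: a diffeomorphism preserving the contact distributions,
i.e. `Φ* η' = cf • η` for some nowhere-vanishing conformal factor. -/
def IsContactomorphism (η : OneForm I M) (η' : OneForm I' M') (Φ : M → M') : Prop :=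
  ∃ cf : M → ℝ, IsContactomorphismWith η η' Φ cf

end TwoManifolds

/-! Unwinding `L_{X_h} η = -R(h) η` with Cartan's formula and `η(X_h) = -h` gives
`ι_{X_h} dη = dh - R(h) η`. Evaluating `♭(♭⁻¹ df) = df` on `X_h` then yields
`X_h(f) = dη(♭⁻¹ df, ♭⁻¹ dh) - h R(f)`, that is `{f, h} = -(X_h(f) + R(h) f)`: this is (i), and
`h` is dissipated because `{h, h} = 0`. Part (ii) is the quotient rule. -/

section ContactHamiltonian

omit [IsManifold I (⊤ : ℕ∞) M]

variable {η : OneForm I M} {R X Vf Vh : VF I M} {f h : M → ℝ}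

theorem extD_swap (η : OneForm I M) (x : M) (u v : TangentSpace I x) :
    extD η x u v = -extD η x v u :=
  (neg_sub _ _).symm

theorem extD_self (η : OneForm I M) (x : M) (u : TangentSpace I x) : extD η x u u = 0 :=
  sub_self _

theorem IsContactForm.exists_isFlatInvOfDiff [IsManifold I (⊤ : ℕ∞) M]
    (hη : IsContactForm I η) (f : M → ℝ) :
    ∃ V : VF I M, IsFlatInvOfDiff η f V := by
  choose V hV using fun x => (hη.2 x).2 (mfderiv I 𝓘(ℝ, ℝ) f x)
  exact ⟨V, hV⟩

theorem IsReeb.apply_of_isFlatInvOfDiff (hR : IsReeb η R) (hVf : IsFlatInvOfDiff η f Vf)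
    (x : M) : η x (Vf x) = vfd R f x := by
  have h := hVf x (R x)
  rwa [flatAt, extD_swap, hR.2 x, neg_zero, zero_add, hR.1 x, mul_one] at h

theorem IsContactHamVF.extD_apply (hX : IsContactHamVF η R h X) (x : M)
    (w : TangentSpace I x) :
    extD η x (X x) w = dval h x w - vfd R h x * η x w := by
  have hlie := hX.2 x w
  have hηX : (fun y => η y (X y)) = -h := funext hX.1
  rw [lieD, hηX, mfderiv_neg] at hlie
  change extD η x (X x) w + -dval h x w = _ at hlie
  linarith

theorem IsContactHamVF.vfd_eq (hX : IsContactHamVF η R h X) (hR : IsReeb η R)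
    (hVf : IsFlatInvOfDiff η f Vf) (hVh : IsFlatInvOfDiff η h Vh) (x : M) :
    vfd X f x = extD η x (Vf x) (Vh x) - h x * vfd R f x := by
  have hXf : vfd X f x = extD η x (Vf x) (X x) + η x (Vf x) * η x (X x) := (hVf x (X x)).symm
  have hVfh : dval h x (Vf x) = extD η x (Vh x) (Vf x) + η x (Vh x) * η x (Vf x) :=
    (hVh x (Vf x)).symm
  rw [hXf, extD_swap η x (Vf x), hX.extD_apply, hVfh, extD_swap η x (Vh x),
    hR.apply_of_isFlatInvOfDiff hVf, hR.apply_of_isFlatInvOfDiff hVh, hX.1 x]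
  ring

theorem IsContactHamVF.jacVal_eq (hX : IsContactHamVF η R h X) (hR : IsReeb η R)
    (hVf : IsFlatInvOfDiff η f Vf) (hVh : IsFlatInvOfDiff η h Vh) (x : M) :
    jacVal η R f h Vf Vh x = -(vfd X f x + vfd R h x * f x) := by
  rw [jacVal, hX.vfd_eq hR hVf hVh]
  ring

theorem vfd_div {X : VF I M} {f g : M → ℝ} {x : M} (hf : MDifferentiableAt I 𝓘(ℝ, ℝ) f x)
    (hg : MDifferentiableAt I 𝓘(ℝ, ℝ) g x) (hgx : g x ≠ 0) :
    vfd X (fun y => f y / g y) x = vfd X f x / g x - f x / g x ^ 2 * vfd X g x := by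
  change mfderiv I 𝓘(ℝ, ℝ) (f / g) x (X x) = _
  rw [(hf.hasMFDerivAt.div hg.hasMFDerivAt hgx).mfderiv]
  change 1 / g x * vfd X f x - f x / g x ^ 2 * vfd X g x = _
  ring

end ContactHamiltonian

theorem dissipated_quantities_of_contact_hamiltonian_system_general
    (η : OneForm I M) (hη : IsContactForm I η)
    (R : VF I M) (hR : IsReeb η R)
    (h : M → ℝ)
    (Xh : VF I M) (hXh : IsContactHamVF η R h Xh) :
    -- (i) dissipated iff the Jacobi bracket with `h` vanishes
    (∀ f : M → ℝ, SmoothFn I f → ∀ Vf Vh : VF I M,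
      IsFlatInvOfDiff η f Vf → IsFlatInvOfDiff η h Vh →
      ((∀ x : M, vfd Xh f x = - vfd R h x * f x) ↔
        (∀ x : M, jacVal η R f h Vf Vh x = 0))) ∧
    -- in particular, `h` is a dissipated quantity
    (∀ x : M, vfd Xh h x = - vfd R h x * h x) ∧
    -- (ii) the quotient of two dissipated quantities is conserved on `M \ f₂⁻¹(0)`
    (∀ f₁ f₂ : M → ℝ, SmoothFn I f₁ → SmoothFn I f₂ →
      (∀ x : M, vfd Xh f₁ x = - vfd R h x * f₁ x) →
      (∀ x : M, vfd Xh f₂ x = - vfd R h x * f₂ x) →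
      ∀ x : M, f₂ x ≠ 0 → vfd Xh (fun y => f₁ y / f₂ y) x = 0) := by
  refine ⟨fun f _ Vf Vh hVf hVh => forall_congr' fun x => ?_, fun x => ?_, ?_⟩
  · rw [hXh.jacVal_eq hR hVf hVh]
    constructor <;> intro hx <;> linarith
  · obtain ⟨Vh, hVh⟩ := hη.exists_isFlatInvOfDiff h
    have hbracket := hXh.jacVal_eq hR hVh hVh x
    rw [jacVal, extD_self] at hbracket
    linarith
  · intro f₁ f₂ hf₁ hf₂ hd₁ hd₂ x hx
    rw [vfd_div (hf₁.mdifferentiableAt (by simp)) (hf₂.mdifferentiableAt (by simp)) hx,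
      hd₁ x, hd₂ x]
    field_simp
    ring

/-- For a contact Hamiltonian system `(M, η, h)`: (i) a smooth function `f`
is a dissipated quantity (`X_h(f) = -R(h) f`) iff `{f, h} = 0`; in particular `h` itself is
dissipated; (ii) a quotient of two dissipated quantities is a conserved quantity away from the
zeros of the denominator. -/
theorem dissipated_quantities_of_contact_hamiltonian_system
    {n : ℕ} [FiniteDimensional ℝ E] (hdim : Module.finrank ℝ E = 2 * n + 1)
    (η : OneForm I M) (hη : IsContactForm I η)
    (R : VF I M) (hR : IsReeb η R)
    (h : M → ℝ) (hh : SmoothFn I h)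
    (Xh : VF I M) (hXh : IsContactHamVF η R h Xh) :
    -- (i) dissipated iff the Jacobi bracket with `h` vanishes
    (∀ f : M → ℝ, SmoothFn I f → ∀ Vf Vh : VF I M,
      IsFlatInvOfDiff η f Vf → IsFlatInvOfDiff η h Vh →
      ((∀ x : M, vfd Xh f x = - vfd R h x * f x) ↔
        (∀ x : M, jacVal η R f h Vf Vh x = 0))) ∧
    -- in particular, `h` is a dissipated quantity
    (∀ x : M, vfd Xh h x = - vfd R h x * h x) ∧
    -- (ii) the quotient of two dissipated quantities is conserved on `M \ f₂⁻¹(0)`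
    (∀ f₁ f₂ : M → ℝ, SmoothFn I f₁ → SmoothFn I f₂ →
      (∀ x : M, vfd Xh f₁ x = - vfd R h x * f₁ x) →
      (∀ x : M, vfd Xh f₂ x = - vfd R h x * f₂ x) →
      ∀ x : M, f₂ x ≠ 0 → vfd Xh (fun y => f₁ y / f₂ y) x = 0) :=
  dissipated_quantities_of_contact_hamiltonian_system_general η hη R hR h Xh hXh
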